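/- Let 𝔽 be a free group, and let A and (C_i)_{i≥0} be subgroups of 𝔽 generating an internal free product with 𝔽 = A ⋆ (⋆_{i≥0} C_i). Let ψ : 𝔽 → 𝔽 be an injective homomorphism with ψ(C_i) = C_{i+1} for all i ≥ 0, and let m ≥ 0 be an integer such that ψ(A) ≤ F := A ⋆ (⋆_{i=0}^m C_i). Set L = A ⋆ (⋆_{i=0}^{m−1} C_i), set U = ψ(L) ≤ F, and let φ : L → U be the isomorphism obtained by restricting ψ. Then the canonical homomorphism from the HNN extension F∗_φ (of F with associated subgroups L and U and identifying isomorphism φ) to M(ψ), restricting to the inclusion F ≤ 𝔽 and sending stable letter to stable letter, is an isomorphism. -/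

import Mathlib

/-- A family of subgroups of `G` generates an internal free product if the canonical
homomorphism from their abstract free product (coproduct), induced by the inclusions,
is injective. -/
def IsInternalFreeProduct {G : Type*} [Group G] {ι : Type*} (H : ι → Subgroup G) : Prop :=
  Function.Injective (Monoid.CoprodI.lift (fun i => (H i).subtype))

/-- `conjSub g A` is the conjugate subgroup `g A g⁻¹`. -/
def conjSub {G : Type*} [Group G] (g : G) (A : Subgroup G) : Subgroup G :=
  A.map (MulAut.conj g).toMonoidHom

/-- `A` is a free factor of `G` if there is a subgroup `K` such that `A` and `K`
generate an internal free product equal to `G`. -/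
def IsFreeFactor {G : Type*} [Group G] (A : Subgroup G) : Prop :=
  ∃ K : Subgroup G,
    IsInternalFreeProduct (fun b : Bool => bif b then A else K) ∧ A ⊔ K = ⊤

/-- A collection of non-trivial subgroups of `G` is a free factor system if there are
elements `f i` such that the conjugates `(f i)⁻¹ * A i * (f i)` generate an internal
free product which is a free factor of `G`. -/
def IsFreeFactorSystem {G : Type*} [Group G] {ι : Type*} (A : ι → Subgroup G) : Prop :=
  (∀ i, A i ≠ ⊥) ∧
  ∃ f : ι → G, IsInternalFreeProduct (fun i => conjSub (f i)⁻¹ (A i)) ∧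
    IsFreeFactor (⨆ i, conjSub (f i)⁻¹ (A i))

/-- The mapping torus `M(ψ)` of an injective endomorphism `ψ` of `F`: the HNN extension
`⟨F, t ∣ t⁻¹ f t = ψ(f)⟩`, realised as the HNN extension of `F` with associated subgroups
`ψ(F)` and `F = ⊤` and identifying isomorphism induced by `ψ`. -/
noncomputable abbrev MappingTorus {F : Type*} [Group F] (ψ : F →* F)
    (hψ : Function.Injective ψ) : Type _ :=
  HNNExtension F ψ.range ⊤ ((MonoidHom.ofInjective hψ).symm.trans Subgroup.topEquiv.symm)

/-- The canonical embedding `F →* M(ψ)`. -/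
noncomputable def MappingTorus.of {F : Type*} [Group F] (ψ : F →* F)
    (hψ : Function.Injective ψ) : F →* MappingTorus ψ hψ :=
  HNNExtension.of

/-- The stable letter of `M(ψ)`; it satisfies `t⁻¹ * of f * t = of (ψ f)`. -/
noncomputable def MappingTorus.t {F : Type*} [Group F] (ψ : F →* F)
    (hψ : Function.Injective ψ) : MappingTorus ψ hψ :=
  HNNExtension.t

/-! The inverse of the canonical map `F∗_φ → M(ψ)` is induced by a homomorphism
`ρ : 𝔽 → F∗_φ` that is the inclusion on `F` and satisfies `ρ (ψ f) = t⁻¹ ρ(f) t`.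
Because `𝔽 = A ⋆ (⋆ᵢ C_i)`, `ρ` may be prescribed freely on the factors: the inclusion on `A`,
and `c ↦ t⁻ⁱ ψ⁻ⁱ(c) tⁱ` on `C_i`. For `i ≤ m` this is again the inclusion, because
`ψ⁻¹(C_i) = C_{i-1} ≤ L` and `t⁻¹ ℓ t = ψ(ℓ)` holds in `F∗_φ` for `ℓ ∈ L`; on `A` the relation
`ρ (ψ a) = t⁻¹ ρ(a) t` holds for the same reason, as `A ≤ L` and `ψ(A) ≤ F`. -/

open Subgroup

namespace MonoidHom

variable {G M : Type*} [Group G] [Monoid M] {ι : Type*} {H : ι → Subgroup G}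

theorem ext_of_iSup_eq_top (hH : ⨆ i, H i = ⊤) {f g : G →* M}
    (hfg : ∀ i, ∀ x ∈ H i, f x = g x) : f = g := by
  have hle : ⨆ i, H i ≤ f.eqLocus g := iSup_le fun i x hx => hfg i x hx
  ext x
  exact hle (hH ▸ mem_top x)

theorem ext_of_iSup_eq {F : Subgroup G} (hH : ⨆ i, H i = F) {f g : F →* M}
    (hfg : ∀ i, ∀ x : F, (x : G) ∈ H i → f x = g x) : f = g := by
  subst hH
  have hle : ⨆ i, H i ≤ (f.eqLocus g).map (⨆ i, H i).subtype := iSup_le fun i x hx =>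
    ⟨⟨x, le_iSup H i hx⟩, hfg i ⟨x, le_iSup H i hx⟩ hx, rfl⟩
  ext x
  obtain ⟨y, hy, hyx⟩ := hle x.2
  exact Subtype.ext hyx ▸ hy

end MonoidHom

namespace IsInternalFreeProduct

variable {G K : Type*} [Group G] [Group K] {ι : Type*} {H : ι → Subgroup G}
  (hfp : IsInternalFreeProduct H) (hH : ⨆ i, H i = ⊤)

noncomputable def mulEquiv : Monoid.CoprodI (fun i : ι => ↥(H i)) ≃* G :=
  MulEquiv.ofBijective _ ⟨hfp, by
    rw [← MonoidHom.range_eq_top, Monoid.CoprodI.range_eq_iSup]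
    simpa only [range_subtype] using hH⟩

theorem mulEquiv_symm_apply_coe {i : ι} (x : H i) :
    (hfp.mulEquiv hH).symm (x : G) = Monoid.CoprodI.of (M := fun i : ι => ↥(H i)) x :=
  (MulEquiv.symm_apply_eq _).2 (Monoid.CoprodI.lift_of (fun i => (H i).subtype) x).symm

noncomputable def lift (φ : ∀ i, H i →* K) : G →* K :=
  (Monoid.CoprodI.lift φ).comp (hfp.mulEquiv hH).symm.toMonoidHom

theorem lift_apply_coe (φ : ∀ i, H i →* K) {i : ι} (x : H i) : hfp.lift hH φ x = φ i x :=
  (congrArg (Monoid.CoprodI.lift φ) (hfp.mulEquiv_symm_apply_coe hH x)).trans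
    (Monoid.CoprodI.lift_of φ x)

end IsInternalFreeProduct

namespace MappingTorus

variable {𝔽 K : Type*} [Group 𝔽] [Group K] {ψ : 𝔽 →* 𝔽} (hψ : Function.Injective ψ)

theorem symm_ofInjective_apply (f : 𝔽) :
    (((MonoidHom.ofInjective hψ).symm.trans Subgroup.topEquiv.symm ⟨ψ f, f, rfl⟩ :
      (⊤ : Subgroup 𝔽)) : 𝔽) = f :=
  hψ (MonoidHom.apply_ofInjective_symm hψ _)

theorem of_map (f : 𝔽) : of ψ hψ (ψ f) = (t ψ hψ)⁻¹ * of ψ hψ f * t ψ hψ := by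
  have h := HNNExtension.t_mul_of (φ :=
    (MonoidHom.ofInjective hψ).symm.trans Subgroup.topEquiv.symm) ⟨ψ f, f, rfl⟩
  rw [symm_ofInjective_apply] at h
  rw [mul_assoc]
  exact eq_inv_mul_of_mul_eq h

noncomputable def lift (ρ : 𝔽 →* K) (s : K) (hs : ∀ f, ρ (ψ f) = s⁻¹ * ρ f * s) :
    MappingTorus ψ hψ →* K :=
  HNNExtension.lift ρ s fun ⟨_, f, rfl⟩ => by
    rw [symm_ofInjective_apply, hs, mul_assoc, mul_inv_cancel_left]

@[simp]
theorem lift_of (ρ : 𝔽 →* K) (s : K) (hs : ∀ f, ρ (ψ f) = s⁻¹ * ρ f * s) (f : 𝔽) :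
    lift hψ ρ s hs (of ψ hψ f) = ρ f :=
  HNNExtension.lift_of _ _ _ f

@[simp]
theorem lift_t (ρ : 𝔽 →* K) (s : K) (hs : ∀ f, ρ (ψ f) = s⁻¹ * ρ f * s) :
    lift hψ ρ s hs (t ψ hψ) = s :=
  HNNExtension.lift_t _ _ _

end MappingTorus

namespace RestrictedHNN

variable {𝔽 : Type*} [Group 𝔽] {ψ : 𝔽 →* 𝔽} (hψ : Function.Injective ψ)
  {F L : Subgroup 𝔽} (hLF : L ≤ F) (hU : L.map ψ ≤ F)

noncomputable def restrictIso : (L.map ψ).subgroupOf F ≃* L.subgroupOf F :=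
  (subgroupOfEquivOfLe hU).trans
    ((L.equivMapOfInjective ψ hψ).symm.trans (subgroupOfEquivOfLe hLF).symm)

theorem map_restrictIso_apply (x : (L.map ψ).subgroupOf F) :
    ψ ((restrictIso hψ hLF hU x : F) : 𝔽) = ((x : F) : 𝔽) := by
  show ψ (((L.equivMapOfInjective ψ hψ).symm (subgroupOfEquivOfLe hU x) : L) : 𝔽) = _
  rw [← coe_equivMapOfInjective_apply L ψ hψ, MulEquiv.apply_symm_apply]
  rfl

end RestrictedHNN

noncomputable abbrev RestrictedHNN {𝔽 : Type*} [Group 𝔽] {ψ : 𝔽 →* 𝔽}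
    (hψ : Function.Injective ψ) {F L : Subgroup 𝔽} (hLF : L ≤ F) (hU : L.map ψ ≤ F) :
    Type _ :=
  HNNExtension F ((L.map ψ).subgroupOf F) (L.subgroupOf F) (RestrictedHNN.restrictIso hψ hLF hU)

namespace RestrictedHNN

open HNNExtension

variable {𝔽 : Type*} [Group 𝔽] {ψ : 𝔽 →* 𝔽} (hψ : Function.Injective ψ)
  {F L : Subgroup 𝔽} (hLF : L ≤ F) (hU : L.map ψ ≤ F)

theorem of_map (x : F) (hx : (x : 𝔽) ∈ L) :
    (of ⟨ψ x, hU (mem_map_of_mem ψ hx)⟩ : RestrictedHNN hψ hLF hU) = t⁻¹ * of x * t :=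
  equiv_symm_eq_conj (φ := restrictIso hψ hLF hU) ⟨x, hx⟩

noncomputable def toMappingTorus : RestrictedHNN hψ hLF hU →* MappingTorus ψ hψ :=
  lift ((MappingTorus.of ψ hψ).comp F.subtype) (MappingTorus.t ψ hψ) fun u => by
    simp only [MonoidHom.comp_apply, F.coe_subtype]
    rw [← map_restrictIso_apply hψ hLF hU u, MappingTorus.of_map, mul_assoc,
      mul_inv_cancel_left]

@[simp]
theorem toMappingTorus_of (z : F) :
    toMappingTorus hψ hLF hU (of z) = MappingTorus.of ψ hψ z :=
  lift_of _ _ _ z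

@[simp]
theorem toMappingTorus_t : toMappingTorus hψ hLF hU t = MappingTorus.t ψ hψ :=
  lift_t _ _ _

theorem toMappingTorus_bijective (ρ : 𝔽 →* RestrictedHNN hψ hLF hU)
    (hρF : ∀ z : F, ρ z = of z) (hρt : ∀ f, ρ (ψ f) = t⁻¹ * ρ f * t)
    (hρ : ∀ f, toMappingTorus hψ hLF hU (ρ f) = MappingTorus.of ψ hψ f) :
    Function.Bijective (toMappingTorus hψ hLF hU) := by
  let θ' := MappingTorus.lift hψ ρ t hρt
  have hleft : θ'.comp (toMappingTorus hψ hLF hU) = MonoidHom.id _ :=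
    hom_ext (MonoidHom.ext fun z => by simp [θ', hρF]) (by simp [θ'])
  have hright : (toMappingTorus hψ hLF hU).comp θ' = MonoidHom.id _ :=
    hom_ext (MonoidHom.ext hρ) ((congrArg _ (MappingTorus.lift_t hψ ρ t hρt)).trans
      (toMappingTorus_t hψ hLF hU))
  exact (MonoidHom.toMulEquiv _ _ hleft hright).bijective

end RestrictedHNN

namespace Subgroup

variable {G N : Type*} [Group G] [Group N] {f : G →* N} (hf : Function.Injective f)
  {H : Subgroup G} {K : Subgroup N} (h : H.map f = K)

noncomputable def equivOfMapEq : H ≃* K :=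
  (H.equivMapOfInjective f hf).trans (MulEquiv.subgroupCongr h)

theorem coe_equivOfMapEq_apply (x : H) : (equivOfMapEq hf h x : N) = f x := rfl

theorem equivOfMapEq_symm_apply_map (x : H) (hfx : f x ∈ K) :
    (equivOfMapEq hf h).symm ⟨f x, hfx⟩ = x :=
  (MulEquiv.symm_apply_eq _).2 rfl

theorem map_equivOfMapEq_symm_apply (y : K) : f ((equivOfMapEq hf h).symm y) = y := by
  rw [← coe_equivOfMapEq_apply hf h, MulEquiv.apply_symm_apply]

end Subgroup

section Decomposition

variable {𝔽 : Type*} [Group 𝔽]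

/-- `A ⋆ C₀ ⋆ ⋯ ⋆ C_{n-1}`: the paper's `F` for `n = m + 1` and its `L` for `n = m`. -/
def truncatedSup (A : Subgroup 𝔽) (C : ℕ → Subgroup 𝔽) (n : ℕ) : Subgroup 𝔽 :=
  A ⊔ ⨆ i : Fin n, C i

variable {A : Subgroup 𝔽} {C : ℕ → Subgroup 𝔽}

theorem left_le_truncatedSup (n : ℕ) : A ≤ truncatedSup A C n := le_sup_left

theorem le_truncatedSup {i n : ℕ} (hi : i < n) : C i ≤ truncatedSup A C n :=
  (le_iSup (fun j : Fin n => C j) ⟨i, hi⟩).trans le_sup_right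

theorem truncatedSup_mono {m n : ℕ} (hmn : m ≤ n) : truncatedSup A C m ≤ truncatedSup A C n :=
  sup_le (left_le_truncatedSup _)
    (iSup_le fun i => le_truncatedSup (i.2.trans_le hmn))

theorem iSup_option_eq_truncatedSup (n : ℕ) :
    ⨆ o : Option (Fin n), o.elim A (fun i => C i) = truncatedSup A C n :=
  iSup_option _

theorem map_truncatedSup_le {ψ : 𝔽 →* 𝔽} (hC : ∀ i, (C i).map ψ = C (i + 1)) {m : ℕ}
    (hA : A.map ψ ≤ truncatedSup A C (m + 1)) :
    (truncatedSup A C m).map ψ ≤ truncatedSup A C (m + 1) := by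
  rw [truncatedSup, Subgroup.map_sup, Subgroup.map_iSup]
  exact sup_le hA (iSup_le fun i => hC i ▸ le_truncatedSup (Nat.succ_lt_succ i.2))

variable {ψ : 𝔽 →* 𝔽} (hψ : Function.Injective ψ) (hC : ∀ i, (C i).map ψ = C (i + 1))
  {m : ℕ} (hA : A.map ψ ≤ truncatedSup A C (m + 1))

local notation "𝓗" =>
  RestrictedHNN hψ (truncatedSup_mono (A := A) (C := C) m.le_succ) (map_truncatedSup_le hC hA)

open HNNExtension RestrictedHNN

noncomputable def ofC : ∀ i, C i →* 𝓗
  | 0 => of.comp (inclusion (le_truncatedSup m.succ_pos))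
  | i + 1 => (MulAut.conj (t : 𝓗)⁻¹).toMonoidHom.comp
      ((ofC i).comp (equivOfMapEq hψ (hC i)).symm.toMonoidHom)

theorem ofC_succ (i : ℕ) (c : C (i + 1)) :
    ofC hψ hC hA (i + 1) c = t⁻¹ * ofC hψ hC hA i ((equivOfMapEq hψ (hC i)).symm c) * t := by
  simp [ofC, MulAut.conj]

theorem ofC_eq_of : ∀ {i : ℕ} (hi : i ≤ m) (c : C i),
    ofC hψ hC hA i c = of ⟨c, le_truncatedSup (Nat.lt_succ_of_le hi) c.2⟩
  | 0, _, _ => rfl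
  | i + 1, hi, c => by
    rw [ofC_succ, ofC_eq_of (Nat.le_of_succ_le hi), ← of_map]
    · exact congrArg of (Subtype.ext (map_equivOfMapEq_symm_apply hψ (hC i) c))
    · exact le_truncatedSup (Nat.lt_of_succ_le hi) ((equivOfMapEq hψ (hC i)).symm c).2

theorem toMappingTorus_ofC : ∀ (i : ℕ) (c : C i),
    toMappingTorus _ _ _ (ofC hψ hC hA i c) = MappingTorus.of ψ hψ c
  | 0, c => toMappingTorus_of _ _ _ _
  | i + 1, c => by
    rw [ofC_succ, map_mul, map_mul, map_inv, toMappingTorus_t, toMappingTorus_ofC i,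
      ← MappingTorus.of_map, map_equivOfMapEq_symm_apply]

variable (hfp : IsInternalFreeProduct (fun o : Option ℕ => o.elim A C))
  (htop : ⨆ o : Option ℕ, o.elim A C = ⊤)

noncomputable def toHNN : 𝔽 →* 𝓗 :=
  hfp.lift htop fun
    | none => of.comp (inclusion (left_le_truncatedSup _))
    | some i => ofC hψ hC hA i

theorem toHNN_left (a : A) :
    toHNN hψ hC hA hfp htop a = of ⟨a, left_le_truncatedSup _ a.2⟩ :=
  hfp.lift_apply_coe htop _ (i := none) a

theorem toHNN_factor (i : ℕ) (c : C i) : toHNN hψ hC hA hfp htop c = ofC hψ hC hA i c :=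
  hfp.lift_apply_coe htop _ (i := some i) c

theorem toHNN_truncatedSup (z : truncatedSup A C (m + 1)) :
    toHNN hψ hC hA hfp htop z = of z := by
  refine DFunLike.congr_fun (MonoidHom.ext_of_iSup_eq (iSup_option_eq_truncatedSup (m + 1))
    (f := (toHNN hψ hC hA hfp htop).comp (truncatedSup A C (m + 1)).subtype) (g := of)
    fun o x hx => ?_) z
  cases o with
  | none => exact toHNN_left hψ hC hA hfp htop ⟨x, hx⟩
  | some i =>
    exact (toHNN_factor hψ hC hA hfp htop i ⟨x, hx⟩).trans
      (ofC_eq_of hψ hC hA (Nat.le_of_lt_succ i.2) ⟨x, hx⟩)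

theorem toHNN_map (f : 𝔽) :
    toHNN hψ hC hA hfp htop (ψ f) = t⁻¹ * toHNN hψ hC hA hfp htop f * t := by
  refine DFunLike.congr_fun (MonoidHom.ext_of_iSup_eq_top htop
    (f := (toHNN hψ hC hA hfp htop).comp ψ)
    (g := (MulAut.conj (t : 𝓗)⁻¹).toMonoidHom.comp (toHNN hψ hC hA hfp htop))
    fun o x hx => ?_) f
  simp only [MonoidHom.comp_apply, MulEquiv.coe_toMonoidHom, MulAut.conj_apply, inv_inv]
  cases o with
  | none =>
    rw [toHNN_left hψ hC hA hfp htop ⟨x, hx⟩,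
      toHNN_truncatedSup hψ hC hA hfp htop ⟨ψ x, hA (mem_map_of_mem ψ hx)⟩]
    exact of_map _ _ _ ⟨x, _⟩ (left_le_truncatedSup m hx)
  | some i =>
    have hψx : ψ x ∈ C (i + 1) := hC i ▸ mem_map_of_mem ψ hx
    rw [toHNN_factor hψ hC hA hfp htop i ⟨x, hx⟩,
      toHNN_factor hψ hC hA hfp htop (i + 1) ⟨ψ x, hψx⟩, ofC_succ,
      equivOfMapEq_symm_apply_map hψ (hC i) ⟨x, hx⟩]

theorem toMappingTorus_toHNN (f : 𝔽) :
    toMappingTorus _ _ _ (toHNN hψ hC hA hfp htop f) = MappingTorus.of ψ hψ f := by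
  refine DFunLike.congr_fun (MonoidHom.ext_of_iSup_eq_top htop
    (f := (toMappingTorus _ _ _).comp (toHNN hψ hC hA hfp htop)) (g := MappingTorus.of ψ hψ)
    fun o x hx => ?_) f
  cases o with
  | none =>
    rw [MonoidHom.comp_apply, toHNN_left hψ hC hA hfp htop ⟨x, hx⟩, toMappingTorus_of]
  | some i =>
    rw [MonoidHom.comp_apply, toHNN_factor hψ hC hA hfp htop i ⟨x, hx⟩, toMappingTorus_ofC]

end Decomposition

theorem mappingTorus_iso_hnn_general
    {𝔽 : Type*} [Group 𝔽]
    (A : Subgroup 𝔽) (C : ℕ → Subgroup 𝔽)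
    (hfp : IsInternalFreeProduct (fun o : Option ℕ => o.elim A C))
    (htop : A ⊔ (⨆ i : ℕ, C i) = ⊤)
    (ψ : 𝔽 →* 𝔽) (hψ : Function.Injective ψ)
    (hC : ∀ i : ℕ, (C i).map ψ = C (i + 1))
    (m : ℕ) (F L : Subgroup 𝔽)
    (hF : F = A ⊔ ⨆ i : Fin (m + 1), C (i : ℕ))
    (hL : L = A ⊔ ⨆ i : Fin m, C (i : ℕ))
    (hA : A.map ψ ≤ F) :
    ∃ e : ↥((L.map ψ).subgroupOf F) ≃* ↥(L.subgroupOf F),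
      (∀ x : ↥((L.map ψ).subgroupOf F),
        ψ (((e x : ↥F) : 𝔽)) = ((x : ↥F) : 𝔽)) ∧
      ∃ θ : HNNExtension ↥F ((L.map ψ).subgroupOf F) (L.subgroupOf F) e →*
          MappingTorus ψ hψ,
        (∀ z : ↥F, θ (HNNExtension.of z) = MappingTorus.of ψ hψ (z : 𝔽)) ∧
        θ HNNExtension.t = MappingTorus.t ψ hψ ∧
        Function.Bijective θ := by
  subst hF hL
  have hLF := truncatedSup_mono (A := A) (C := C) m.le_succ
  have hU := map_truncatedSup_le hC hA
  have htop' : ⨆ o : Option ℕ, o.elim A C = ⊤ := by rwa [iSup_option]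
  exact ⟨RestrictedHNN.restrictIso hψ hLF hU, RestrictedHNN.map_restrictIso_apply hψ hLF hU,
    RestrictedHNN.toMappingTorus hψ hLF hU, RestrictedHNN.toMappingTorus_of hψ hLF hU,
    RestrictedHNN.toMappingTorus_t hψ hLF hU,
    RestrictedHNN.toMappingTorus_bijective hψ hLF hU (toHNN hψ hC hA hfp htop')
      (toHNN_truncatedSup hψ hC hA hfp htop') (toHNN_map hψ hC hA hfp htop')
      (toMappingTorus_toHNN hψ hC hA hfp htop')⟩

/-- The HNN decomposition of a finitely generated mapping torus: if
`𝔽 = A ⋆ (⋆_{i≥0} C_i)` with `ψ(C_i) = C_{i+1}` and `ψ(A) ≤ F = A ⋆ C₀ ⋆ ⋯ ⋆ C_m`, then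
with `L = A ⋆ C₀ ⋆ ⋯ ⋆ C_{m-1}` and `U = ψ(L)`, the canonical homomorphism from the HNN
extension `F∗_φ` (`φ : L → U` the restriction of `ψ`) to `M(ψ)`, restricting to the
inclusion on `F` and matching stable letters, is an isomorphism. -/
theorem mappingTorus_iso_hnn
    {𝔽 : Type*} [Group 𝔽] [IsFreeGroup 𝔽]
    (A : Subgroup 𝔽) (C : ℕ → Subgroup 𝔽)
    (hfp : IsInternalFreeProduct (fun o : Option ℕ => o.elim A C))
    (htop : A ⊔ (⨆ i : ℕ, C i) = ⊤)
    (ψ : 𝔽 →* 𝔽) (hψ : Function.Injective ψ)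
    (hC : ∀ i : ℕ, (C i).map ψ = C (i + 1))
    (m : ℕ) (F L : Subgroup 𝔽)
    (hF : F = A ⊔ ⨆ i : Fin (m + 1), C (i : ℕ))
    (hL : L = A ⊔ ⨆ i : Fin m, C (i : ℕ))
    (hA : A.map ψ ≤ F) :
    ∃ e : ↥((L.map ψ).subgroupOf F) ≃* ↥(L.subgroupOf F),
      (∀ x : ↥((L.map ψ).subgroupOf F),
        ψ (((e x : ↥F) : 𝔽)) = ((x : ↥F) : 𝔽)) ∧
      ∃ θ : HNNExtension ↥F ((L.map ψ).subgroupOf F) (L.subgroupOf F) e →*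
          MappingTorus ψ hψ,
        (∀ z : ↥F, θ (HNNExtension.of z) = MappingTorus.of ψ hψ (z : 𝔽)) ∧
        θ HNNExtension.t = MappingTorus.t ψ hψ ∧
        Function.Bijective θ :=
  mappingTorus_iso_hnn_general A C hfp htop ψ hψ hC m F L hF hL hA
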